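/- arXiv:2111.09494 — 4 statements merged into one kernel-verified Lean document; each statement's English description precedes it below -/
import Mathlib

section
/- If f : [0,∞) → ℝ is a nonnegative continuous function satisfying f(τ₂) + ∫_{τ₁}^{τ₂} f(τ) dτ ≤ k·f(τ₁) for all 0 ≤ τ₁ < τ₂ and some constant k > 0, then there exist constants C, c > 0 depending only on k such that f(τ) ≤ C·e^{-cτ}·f(0) for all τ ≥ 0. -/
/-- If a nonnegative continuous function on `[0,∞)` satisfies
`f τ₂ + ∫_{τ₁}^{τ₂} f ≤ k f τ₁` for all `0 ≤ τ₁ < τ₂`, then it decays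
exponentially, with constants depending only on `k`. -/
theorem exp_decay_from_integral_ineq (k : ℝ) (hk : 0 < k) :
    ∃ C > (0:ℝ), ∃ c > (0:ℝ), ∀ f : ℝ → ℝ,
      ContinuousOn f (Set.Ici 0) →
      (∀ τ ∈ Set.Ici (0:ℝ), 0 ≤ f τ) →
      (∀ τ₁ τ₂ : ℝ, 0 ≤ τ₁ → τ₁ < τ₂ →
        f τ₂ + ∫ τ in τ₁..τ₂, f τ ≤ k * f τ₁) →
      ∀ τ : ℝ, 0 ≤ τ → f τ ≤ C * Real.exp (-c * τ) * f 0 := by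
  set K : ℝ := max k 1 with hKdef
  have hK1 : 1 ≤ K := le_max_right _ _
  have hK0 : (0:ℝ) < K := lt_of_lt_of_le one_pos hK1
  have hkK : k ≤ K := le_max_left _ _
  set T : ℝ := 2 * K ^ 2 with hTdef
  have hT0 : (0:ℝ) < T := by positivity
  refine ⟨2 * K, by positivity, Real.log 2 / T, by positivity, ?_⟩
  intro f hcont hpos hineq
  set c : ℝ := Real.log 2 / T with hcdef
  -- strengthen the hypothesis to use K instead of k
  have hK : ∀ τ₁ τ₂ : ℝ, 0 ≤ τ₁ → τ₁ < τ₂ →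
      f τ₂ + ∫ τ in τ₁..τ₂, f τ ≤ K * f τ₁ := by
    intro τ₁ τ₂ h1 h2
    have := hineq τ₁ τ₂ h1 h2
    have hf1 : 0 ≤ f τ₁ := hpos τ₁ h1
    nlinarith [mul_le_mul_of_nonneg_right hkK hf1]
  -- the integral is nonnegative, so f τ₂ ≤ K f τ₁
  have h1 : ∀ τ₁ τ₂ : ℝ, 0 ≤ τ₁ → τ₁ < τ₂ → f τ₂ ≤ K * f τ₁ := by
    intro τ₁ τ₂ ha hb
    have hI : 0 ≤ ∫ τ in τ₁..τ₂, f τ :=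
      intervalIntegral.integral_nonneg hb.le
        (fun x hx => hpos x (le_trans ha hx.1))
    have := hK τ₁ τ₂ ha hb
    linarith
  have h1' : ∀ τ₁ τ₂ : ℝ, 0 ≤ τ₁ → τ₁ ≤ τ₂ → f τ₂ ≤ K * f τ₁ := by
    intro τ₁ τ₂ ha hb
    rcases eq_or_lt_of_le hb with rfl | hlt
    · nlinarith [hpos τ₁ ha]
    · exact h1 τ₁ τ₂ ha hlt
  -- key step: decay by a factor 1/2 over an interval of length T
  have h2 : ∀ τ₁ : ℝ, 0 ≤ τ₁ → f (τ₁ + T) ≤ (1/2) * f τ₁ := by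
    intro τ₁ ha
    have hlt : τ₁ < τ₁ + T := by linarith
    have hsub : Set.uIcc τ₁ (τ₁ + T) ⊆ Set.Ici (0:ℝ) := by
      rw [Set.uIcc_of_le hlt.le]
      intro x hx; exact le_trans ha hx.1
    have hint : IntervalIntegrable f MeasureTheory.volume τ₁ (τ₁ + T) :=
      (hcont.mono hsub).intervalIntegrable
    have hlow : ∀ x ∈ Set.Icc τ₁ (τ₁ + T), f (τ₁ + T) / K ≤ f x := by
      intro x hx
      have hx0 : 0 ≤ x := le_trans ha hx.1
      rcases eq_or_lt_of_le hx.2 with rfl | hxl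
      · rw [div_le_iff₀ hK0]
        nlinarith [hpos _ hx0]
      · rw [div_le_iff₀ hK0]
        have := h1 x (τ₁ + T) hx0 hxl
        linarith
    have hmono : ∫ _ in τ₁..(τ₁ + T), (f (τ₁ + T) / K) ≤ ∫ τ in τ₁..(τ₁ + T), f τ :=
      intervalIntegral.integral_mono_on hlt.le intervalIntegrable_const hint hlow
    rw [intervalIntegral.integral_const, smul_eq_mul] at hmono
    have hKey := hK τ₁ (τ₁ + T) ha hlt
    have hTdiv : (τ₁ + T - τ₁) * (f (τ₁ + T) / K) = 2 * K * f (τ₁ + T) := by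
      field_simp [hTdef]; ring
    rw [hTdiv] at hmono
    nlinarith [hpos (τ₁ + T) (by linarith : (0:ℝ) ≤ τ₁ + T)]
  -- iterate
  have h3 : ∀ n : ℕ, f ((n : ℝ) * T) ≤ (1/2)^n * f 0 := by
    intro n
    induction n with
    | zero => simp
    | succ n ih =>
      have hn0 : (0:ℝ) ≤ (n : ℝ) * T := by positivity
      have := h2 ((n : ℝ) * T) hn0
      have heq : ((n : ℝ) + 1) * T = (n : ℝ) * T + T := by ring
      push_cast
      rw [heq]
      calc f ((n : ℝ) * T + T) ≤ (1/2) * f ((n : ℝ) * T) := this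
        _ ≤ (1/2) * ((1/2)^n * f 0) := by linarith
        _ = (1/2)^(n+1) * f 0 := by ring
  -- conclude
  intro τ hτ
  set n : ℕ := ⌊τ / T⌋₊ with hndef
  have hdiv0 : 0 ≤ τ / T := div_nonneg hτ hT0.le
  have hn1 : (n : ℝ) * T ≤ τ := by
    have := Nat.floor_le hdiv0
    calc (n : ℝ) * T ≤ (τ / T) * T := by
          exact mul_le_mul_of_nonneg_right this hT0.le
      _ = τ := by field_simp
  have hn2 : τ / T < (n : ℝ) + 1 := Nat.lt_floor_add_one _
  have hfτ : f τ ≤ K * ((1/2)^n * f 0) := by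
    have := h1' ((n : ℝ) * T) τ (by positivity) hn1
    have h0n : (0:ℝ) ≤ (n : ℝ) * T := by positivity
    calc f τ ≤ K * f ((n : ℝ) * T) := this
      _ ≤ K * ((1/2)^n * f 0) := by
          exact mul_le_mul_of_nonneg_left (h3 n) hK0.le
  have hexp : ((1:ℝ)/2)^n ≤ 2 * Real.exp (-c * τ) := by
    have hlog2 : (0:ℝ) < Real.log 2 := Real.log_pos (by norm_num)
    have hcτ : c * τ ≤ Real.log 2 * ((n : ℝ) + 1) := by
      have : τ / T ≤ (n : ℝ) + 1 := hn2.le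
      have := mul_le_mul_of_nonneg_left this hlog2.le
      calc c * τ = Real.log 2 * (τ / T) := by rw [hcdef]; ring
        _ ≤ Real.log 2 * ((n : ℝ) + 1) := this
    have hkey : Real.exp (-(Real.log 2 * ((n : ℝ) + 1))) ≤ Real.exp (-c * τ) := by
      apply Real.exp_le_exp.mpr; linarith
    have hval : Real.exp (-(Real.log 2 * ((n : ℝ) + 1))) = (1/2)^(n+1) := by
      have : -(Real.log 2 * ((n : ℝ) + 1)) = ((n + 1 : ℕ) : ℝ) * (-Real.log 2) := by
        push_cast; ring
      rw [this, Real.exp_nat_mul, Real.exp_neg, Real.exp_log (by norm_num : (0:ℝ) < 2)]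
      norm_num
    rw [hval] at hkey
    have : ((1:ℝ)/2)^(n+1) = (1/2) * (1/2)^n := by ring
    rw [this] at hkey
    linarith
  have hf0 : 0 ≤ f 0 := hpos 0 Set.self_mem_Ici
  calc f τ ≤ K * ((1/2)^n * f 0) := hfτ
    _ ≤ K * ((2 * Real.exp (-c * τ)) * f 0) := by
        apply mul_le_mul_of_nonneg_left _ hK0.le
        exact mul_le_mul_of_nonneg_right hexp hf0
    _ = 2 * K * Real.exp (-c * τ) * f 0 := by ring
end

section
/- For M > 0 and Λ > 0, the polynomial equation 1 - 2M/r - Λr²/3 = 0 (equivalently Λr³ - 3r + 6M = 0) admits exactly two distinct positive real roots if and only if 0 < M < 1/(3√Λ), i.e. 9M²Λ < 1. -/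
/-!
On `r > 0` the cubic `p r = Λ r³ - 3 r + 6 M` is decreasing then increasing, with its minimum at
the critical point `c = 1 / √Λ`, where `p c = 6 M - 2 c`, and `p r - p c = Λ (r - c)² (r + 2 c)`.
If `p c ≥ 0` this identity leaves `c` as the only possible positive root. If `p c < 0`, then since
`p 0 = 6 M > 0` and `p (2 c) = 6 M + 2 c > 0` there is a root on each side of `c`, and factoring
`p` through these two roots shows that the third root is negative. Finally `p c < 0` reads
`3 M < c`, i.e. `9 M² Λ < 1`.
-/

open Set

section Cubic

variable {Λ M : ℝ}

lemma cubic_sub_cubic_eq_of_critical {c : ℝ} (hc : Λ * c ^ 2 = 1) (r : ℝ) :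
    Λ*r^3 - 3*r - (Λ*c^3 - 3*c) = Λ * (r - c) ^ 2 * (r + 2*c) := by
  linear_combination 3 * (r - c) * hc

lemma cubic_at_critical {c : ℝ} (hc : Λ * c ^ 2 = 1) : Λ*c^3 - 3*c + 6*M = 6*M - 2*c := by
  linear_combination c * hc

lemma eq_critical_of_cubic_eq_zero {c r : ℝ} (hΛ : 0 < Λ) (hc : Λ * c ^ 2 = 1) (hc₀ : 0 < c)
    (hcrit : 0 ≤ Λ*c^3 - 3*c + 6*M) (hr : 0 < r) (hroot : Λ*r^3 - 3*r + 6*M = 0) : r = c := by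
  have hsq : Λ * (r + 2*c) * (r - c) ^ 2 ≤ 0 := by
    linarith [cubic_sub_cubic_eq_of_critical hc r]
  have hsq' : (r - c) ^ 2 ≤ 0 :=
    nonpos_of_mul_nonpos_right hsq (by positivity)
  exact sub_eq_zero.mp (pow_eq_zero_iff two_ne_zero |>.mp (le_antisymm hsq' (sq_nonneg _)))

lemma cubic_eq_mul_of_roots {r₁ r₂ : ℝ} (hne : r₁ ≠ r₂)
    (h₁ : Λ*r₁^3 - 3*r₁ + 6*M = 0) (h₂ : Λ*r₂^3 - 3*r₂ + 6*M = 0) (r : ℝ) :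
    Λ*r^3 - 3*r + 6*M = Λ * (r - r₁) * (r - r₂) * (r + r₁ + r₂) := by
  have hdiff : (r₁ - r₂) * (Λ * (r₁^2 + r₁*r₂ + r₂^2) - 3) = 0 := by
    linear_combination h₁ - h₂
  have hsum : Λ * (r₁^2 + r₁*r₂ + r₂^2) - 3 = 0 :=
    (mul_eq_zero.mp hdiff).resolve_left (sub_ne_zero.mpr hne)
  linear_combination h₁ + (r - r₁) * hsum

lemma eq_or_eq_of_cubic_eq_zero {r₁ r₂ r : ℝ} (hΛ : 0 < Λ) (hne : r₁ ≠ r₂)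
    (hr₁ : 0 ≤ r₁) (hr₂ : 0 ≤ r₂) (h₁ : Λ*r₁^3 - 3*r₁ + 6*M = 0) (h₂ : Λ*r₂^3 - 3*r₂ + 6*M = 0)
    (hr : 0 < r) (hroot : Λ*r^3 - 3*r + 6*M = 0) : r = r₁ ∨ r = r₂ := by
  rw [cubic_eq_mul_of_roots hne h₁ h₂] at hroot
  have hthird : r + r₁ + r₂ ≠ 0 := by positivity
  simpa [hΛ.ne', hthird, sub_eq_zero] using hroot

lemma exists_roots_of_lt_critical {c : ℝ} (hM : 0 < M) (hc : Λ * c ^ 2 = 1) (hc₀ : 0 < c)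
    (hlt : 3 * M < c) :
    ∃ r₁ ∈ Ioo 0 c, ∃ r₂ ∈ Ioo c (2*c),
      Λ*r₁^3 - 3*r₁ + 6*M = 0 ∧ Λ*r₂^3 - 3*r₂ + 6*M = 0 := by
  set p : ℝ → ℝ := fun r => Λ*r^3 - 3*r + 6*M
  have hp : ContinuousOn p univ := by fun_prop
  have hp₀ : p 0 = 6*M := by simp [p]
  have hpc : p c = 6*M - 2*c := cubic_at_critical hc
  have hp₂c : p (2*c) = 6*M + 2*c := by linear_combination 8 * c * hc
  obtain ⟨r₁, hr₁, e₁⟩ : 0 ∈ p '' Ioo 0 c :=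
    intermediate_value_Ioo' hc₀.le (hp.mono (subset_univ _))
      ⟨by rw [hpc]; linarith, by rw [hp₀]; positivity⟩
  obtain ⟨r₂, hr₂, e₂⟩ : 0 ∈ p '' Ioo c (2*c) :=
    intermediate_value_Ioo (by linarith) (hp.mono (subset_univ _))
      ⟨by rw [hpc]; linarith, by rw [hp₂c]; positivity⟩
  exact ⟨r₁, hr₁, r₂, hr₂, e₁, e₂⟩

lemma sq_mul_lt_one_iff {c : ℝ} (hM : 0 ≤ M) (hc : Λ * c ^ 2 = 1) (hc₀ : 0 < c) :
    9*M^2*Λ < 1 ↔ 3 * M < c := by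
  have hΛ : 0 < Λ := pos_of_mul_pos_left (hc ▸ one_pos) (sq_nonneg c)
  rw [← sq_lt_sq₀ (by positivity) hc₀.le]
  constructor <;> intro h <;> nlinarith

end Cubic

/-- The cubic `Λ r³ - 3 r + 6 M = 0` (i.e. `1 - 2M/r - Λr²/3 = 0`) has exactly
two distinct positive real roots if and only if `9 M² Λ < 1`. -/
theorem two_positive_roots_iff_subextremal (M Λ : ℝ) (hM : 0 < M) (hΛ : 0 < Λ) :
    (∃ r₁ r₂ : ℝ, 0 < r₁ ∧ 0 < r₂ ∧ r₁ ≠ r₂ ∧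
      Λ*r₁^3 - 3*r₁ + 6*M = 0 ∧ Λ*r₂^3 - 3*r₂ + 6*M = 0 ∧
      ∀ r : ℝ, 0 < r → Λ*r^3 - 3*r + 6*M = 0 → r = r₁ ∨ r = r₂) ↔
    9*M^2*Λ < 1 := by
  set c := (√Λ)⁻¹
  have hc₀ : 0 < c := inv_pos.mpr (Real.sqrt_pos.mpr hΛ)
  have hc : Λ * c ^ 2 = 1 := by
    rw [inv_pow, Real.sq_sqrt hΛ.le, mul_inv_cancel₀ hΛ.ne']
  rw [sq_mul_lt_one_iff hM.le hc hc₀]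
  constructor
  · rintro ⟨r₁, r₂, hr₁, hr₂, hne, e₁, e₂, -⟩
    by_contra! hge
    have hcrit : 0 ≤ Λ*c^3 - 3*c + 6*M := by linarith [cubic_at_critical (M := M) hc]
    exact hne ((eq_critical_of_cubic_eq_zero hΛ hc hc₀ hcrit hr₁ e₁).trans
      (eq_critical_of_cubic_eq_zero hΛ hc hc₀ hcrit hr₂ e₂).symm)
  · intro hlt
    obtain ⟨r₁, ⟨hr₁, hr₁c⟩, r₂, ⟨hcr₂, -⟩, e₁, e₂⟩ := exists_roots_of_lt_critical hM hc hc₀ hlt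
    have hne : r₁ ≠ r₂ := (hr₁c.trans hcr₂).ne
    exact ⟨r₁, r₂, hr₁, hc₀.trans hcr₂, hne, e₁, e₂, fun r hr hroot =>
      eq_or_eq_of_cubic_eq_zero hΛ hne hr₁.le (hc₀.trans hcr₂).le e₁ e₂ hr hroot⟩
end

section
/- For M > 0, Λ > 0 with 9M²Λ < 1, and with μ(r) = 2M/r + Λr²/3, ξ(r) = (1 - 3M/r)√(1 + 6M/r)/√(1 - 9M²Λ), f(r) = r√(1 - μ(r)), the identity 2·(-ξ(r))·f'(r) - 2f(r)·(d/dr(-ξ(r)) + (2/r)(-ξ(r))) = 2√(1 - 9M²Λ)/(√(1 - μ(r))·√(1 + 6M/r)) holds for all r in the open interval between the two positive roots of 1 - μ. -/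
noncomputable def μ (M Λ r : ℝ) : ℝ := 2*M/r + Λ*r^2/3

noncomputable def ξ (M Λ r : ℝ) : ℝ :=
  (1 - 3*M/r) * Real.sqrt (1 + 6*M/r) / Real.sqrt (1 - 9*M^2*Λ)

/-!
Between two distinct positive roots `a < b` of `1 - μ`, the cubic `3r(1 - μ r) = 3r - 6M - Λr³`
factors as `Λ(r - a)(b - r)(r + a + b)`, so `1 - μ > 0` there and all square roots are of
positive quantities. The derivatives are then explicit; the cancellation that makes the
identity work is `ξ' = 27M² / (r³ √(1 + 6M/r) √(1 - 9M²Λ))`, after which the claim is a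
rational identity in the three square roots, checked using only their squares.
-/

lemma mul_one_sub_μ {M Λ r : ℝ} (hr : r ≠ 0) :
    3 * r * (1 - μ M Λ r) = 3 * r - 6 * M - Λ * r ^ 3 := by
  unfold μ; field_simp; ring

lemma cubic_factor_of_roots {M Λ a b r : ℝ} (hab : a ≠ b)
    (ha : 3 * a - 6 * M - Λ * a ^ 3 = 0) (hb : 3 * b - 6 * M - Λ * b ^ 3 = 0) :
    3 * r - 6 * M - Λ * r ^ 3 = Λ * (r - a) * (b - r) * (r + a + b) := by
  have hsum : 3 - Λ * (a ^ 2 + a * b + b ^ 2) = 0 := by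
    have : (a - b) * (3 - Λ * (a ^ 2 + a * b + b ^ 2)) = 0 := by
      linear_combination ha - hb
    exact (mul_eq_zero.mp this).resolve_left (sub_ne_zero.mpr hab)
  linear_combination ha + (r - a) * hsum

lemma one_sub_μ_pos_of_mem_Ioo {M Λ rp rb r : ℝ} (hΛ : 0 < Λ) (hrp : 0 < rp)
    (hroot1 : 1 - μ M Λ rp = 0) (hroot2 : 1 - μ M Λ rb = 0) (hr : r ∈ Set.Ioo rp rb) :
    0 < 1 - μ M Λ r := by
  obtain ⟨hpr, hrb⟩ := hr
  have hr0 : 0 < r := hrp.trans hpr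
  have hcubic := cubic_factor_of_roots (r := r) (hpr.trans hrb).ne
    (by rw [← mul_one_sub_μ hrp.ne', hroot1, mul_zero])
    (by rw [← mul_one_sub_μ (hrp.trans (hpr.trans hrb)).ne', hroot2, mul_zero])
  have : 0 < 3 * r * (1 - μ M Λ r) := by
    rw [mul_one_sub_μ hr0.ne', hcubic]
    exact mul_pos (mul_pos (mul_pos hΛ (sub_pos.2 hpr)) (sub_pos.2 hrb)) (by linarith)
  exact pos_of_mul_pos_right this (by positivity)

lemma hasDerivAt_const_div (c : ℝ) {r : ℝ} (hr : r ≠ 0) :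
    HasDerivAt (fun s => c / s) (-c / r ^ 2) r := by
  simpa [div_eq_mul_inv] using (hasDerivAt_inv hr).const_mul c

lemma hasDerivAt_μ (M Λ : ℝ) {r : ℝ} (hr : r ≠ 0) :
    HasDerivAt (μ M Λ) (-(2 * M) / r ^ 2 + 2 * Λ * r / 3) r :=
  ((hasDerivAt_const_div (2 * M) hr).add
    (((hasDerivAt_pow 2 r).const_mul Λ).div_const 3)).congr_deriv (by ring)

lemma hasDerivAt_mul_sqrt_one_sub_μ {M Λ r : ℝ} (hr : r ≠ 0) (hA : 0 < 1 - μ M Λ r) :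
    HasDerivAt (fun s => s * √(1 - μ M Λ s))
      ((1 - M / r - 2 * Λ * r ^ 2 / 3) / √(1 - μ M Λ r)) r := by
  refine ((hasDerivAt_id r).mul (((hasDerivAt_μ M Λ hr).const_sub 1).sqrt hA.ne')).congr_deriv ?_
  have hsq : 3 * r * √(1 - μ M Λ r) ^ 2 = 3 * r - 6 * M - Λ * r ^ 3 := by
    rw [Real.sq_sqrt hA.le, mul_one_sub_μ hr]
  have hpos := (Real.sqrt_pos.2 hA).ne'
  generalize √(1 - μ M Λ r) = A at hsq hpos ⊢
  simp only [id]
  field_simp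
  linear_combination hsq

lemma hasDerivAt_ξ {M Λ r : ℝ} (hr : r ≠ 0) (hB : 0 < 1 + 6 * M / r) :
    HasDerivAt (ξ M Λ) (27 * M ^ 2 / (r ^ 3 * √(1 + 6 * M / r) * √(1 - 9 * M ^ 2 * Λ))) r := by
  refine ((((hasDerivAt_const_div (3 * M) hr).const_sub 1).mul
    (((hasDerivAt_const_div (6 * M) hr).const_add 1).sqrt hB.ne')).div_const
      (√(1 - 9 * M ^ 2 * Λ))).congr_deriv ?_
  have hsq : r * √(1 + 6 * M / r) ^ 2 = r + 6 * M := by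
    rw [Real.sq_sqrt hB.le]; field_simp
  have hpos := (Real.sqrt_pos.2 hB).ne'
  generalize √(1 + 6 * M / r) = B at hsq hpos ⊢
  field_simp
  congr 1
  linear_combination 6 * M * hsq

lemma commutation_coefficient_algebra {M Λ r A B C : ℝ} (hr : r ≠ 0) (hA : A ≠ 0) (hB : B ≠ 0)
    (hC : C ≠ 0) (hA2 : A ^ 2 = 1 - μ M Λ r) (hB2 : B ^ 2 = 1 + 6 * M / r)
    (hC2 : C ^ 2 = 1 - 9 * M ^ 2 * Λ) :
    2 * -((1 - 3 * M / r) * B / C) * ((1 - M / r - 2 * Λ * r ^ 2 / 3) / A)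
      - 2 * (r * A) * (-(27 * M ^ 2 / (r ^ 3 * B * C)) + 2 / r * -((1 - 3 * M / r) * B / C))
      = 2 * C / (A * B) := by
  field_simp
  rw [hA2, hB2, hC2, μ]
  field_simp
  ring

theorem key_commutation_coefficient_identity_general (M Λ rp rb : ℝ)
    (hM : 0 < M) (hΛ : 0 < Λ) (hsub : 9*M^2*Λ < 1)
    (hrp : 0 < rp)
    (hroot1 : 1 - μ M Λ rp = 0) (hroot2 : 1 - μ M Λ rb = 0) :
    ∀ r ∈ Set.Ioo rp rb,
      2 * (-ξ M Λ r) * deriv (fun s => s * Real.sqrt (1 - μ M Λ s)) r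
        - 2 * (r * Real.sqrt (1 - μ M Λ r)) *
            (deriv (fun s => -ξ M Λ s) r + (2/r) * (-ξ M Λ r))
      = 2 * Real.sqrt (1 - 9*M^2*Λ) /
          (Real.sqrt (1 - μ M Λ r) * Real.sqrt (1 + 6*M/r)) := by
  intro r hr
  have hr0 : 0 < r := hrp.trans hr.1
  have hA : 0 < 1 - μ M Λ r := one_sub_μ_pos_of_mem_Ioo hΛ hrp hroot1 hroot2 hr
  have hB : 0 < 1 + 6 * M / r := by positivity
  have hC : 0 < 1 - 9 * M ^ 2 * Λ := by linarith
  rw [(hasDerivAt_mul_sqrt_one_sub_μ hr0.ne' hA).deriv,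
    (hasDerivAt_ξ hr0.ne' hB).fun_neg.deriv]
  exact commutation_coefficient_algebra hr0.ne' (Real.sqrt_pos.2 hA).ne'
    (Real.sqrt_pos.2 hB).ne' (Real.sqrt_pos.2 hC).ne' (Real.sq_sqrt hA.le)
    (Real.sq_sqrt hB.le) (Real.sq_sqrt hC.le)

theorem key_commutation_coefficient_identity (M Λ rp rb : ℝ)
    (hM : 0 < M) (hΛ : 0 < Λ) (hsub : 9*M^2*Λ < 1)
    (hrp : 0 < rp) (hrprb : rp < rb)
    (hroot1 : 1 - μ M Λ rp = 0) (hroot2 : 1 - μ M Λ rb = 0) :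
    ∀ r ∈ Set.Ioo rp rb,
      2 * (-ξ M Λ r) * deriv (fun s => s * Real.sqrt (1 - μ M Λ s)) r
        - 2 * (r * Real.sqrt (1 - μ M Λ r)) *
            (deriv (fun s => -ξ M Λ s) r + (2/r) * (-ξ M Λ r))
      = 2 * Real.sqrt (1 - 9*M^2*Λ) /
          (Real.sqrt (1 - μ M Λ r) * Real.sqrt (1 + 6*M/r)) :=
  key_commutation_coefficient_identity_general M Λ rp rb hM hΛ hsub hrp hroot1 hroot2
end

section
/- For M > 0, Λ > 0 with 9M²Λ < 1, the 2×2 matrix with entries g_{t̄t̄} = -(1-μ(r)), g_{t̄r} = g_{rt̄} = -ξ(r), g_{rr} = 27M²/((1-9M²Λ)r²) has determinant equal to -1 for all r > 0 (in particular the (t̄,r) block of the Schwarzschild–de Sitter metric in regular hyperboloidal coordinates is a Lorentzian metric of determinant -1, even at the horizons where 1-μ(r)=0). -/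
/-!
The determinant is `-(ξ² + (1 - μ) g_rr)`. With `x = M / r` one has
`(1 - 3x)² (1 + 6x) = 1 - 27x² + 54x³` and `27x² (1 - μ) = 27x² - 54x³ - 9M²Λ`; these are
`(1 - 9M²Λ) ξ²` and `(1 - 9M²Λ) (1 - μ) g_rr`, and their sum is `1 - 9M²Λ`.
-/

theorem Matrix.det_fin_two_of_neg_symm {R : Type*} [CommRing R] (a b c : R) :
    !![-a, -b; -b, c].det = -(b ^ 2 + a * c) := by
  rw [Matrix.det_fin_two_of]
  ring

theorem sq_mul_add_one_sub_μ_mul (M Λ : ℝ) {r : ℝ} (hr : r ≠ 0) :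
    (1 - 3*M/r)^2 * (1 + 6*M/r) + (1 - μ M Λ r) * (27*M^2 / r^2) = 1 - 9*M^2*Λ := by
  unfold μ
  field_simp
  ring

theorem ξ_sq {M Λ r : ℝ} (hM : 0 ≤ M) (hr : 0 < r) (hsub : 9*M^2*Λ < 1) :
    ξ M Λ r ^ 2 = (1 - 3*M/r)^2 * (1 + 6*M/r) / (1 - 9*M^2*Λ) := by
  have hpos : 0 ≤ 1 + 6*M/r := by positivity
  rw [ξ, div_pow, mul_pow, Real.sq_sqrt hpos, Real.sq_sqrt (by linarith)]

theorem ξ_sq_add_one_sub_μ_mul {M Λ r : ℝ} (hM : 0 ≤ M) (hr : 0 < r) (hsub : 9*M^2*Λ < 1) :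
    ξ M Λ r ^ 2 + (1 - μ M Λ r) * (27*M^2 / ((1 - 9*M^2*Λ) * r^2)) = 1 := by
  have hden : 1 - 9*M^2*Λ ≠ 0 := by linarith
  calc ξ M Λ r ^ 2 + (1 - μ M Λ r) * (27*M^2 / ((1 - 9*M^2*Λ) * r^2))
      = ((1 - 3*M/r)^2 * (1 + 6*M/r) + (1 - μ M Λ r) * (27*M^2 / r^2)) / (1 - 9*M^2*Λ) := by
        rw [ξ_sq hM hr hsub]
        field_simp
    _ = 1 := by rw [sq_mul_add_one_sub_μ_mul M Λ hr.ne', div_self hden]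

theorem metric_block_det_neg_one_general (M Λ : ℝ) (hM : 0 < M)
    (hsub : 9*M^2*Λ < 1) (r : ℝ) (hr : 0 < r) :
    Matrix.det !![-(1 - μ M Λ r), -ξ M Λ r;
                  -ξ M Λ r, 27*M^2 / ((1 - 9*M^2*Λ) * r^2)] = -1 := by
  rw [Matrix.det_fin_two_of_neg_symm, ξ_sq_add_one_sub_μ_mul hM.le hr hsub]

theorem metric_block_det_neg_one (M Λ : ℝ) (hM : 0 < M) (hΛ : 0 < Λ)
    (hsub : 9*M^2*Λ < 1) (r : ℝ) (hr : 0 < r) :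
    Matrix.det !![-(1 - μ M Λ r), -ξ M Λ r;
                  -ξ M Λ r, 27*M^2 / ((1 - 9*M^2*Λ) * r^2)] = -1 :=
  metric_block_det_neg_one_general M Λ hM hsub r hr
end
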